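/- Let H ∈ (0,1) and 0 ≤ a < x < b. Set w⁻ = (b − x)/(b − a) and w⁺ = (x − a)/(b − a). Then k_{1,H}(x,x) − 2w⁻k_{1,H}(x,a) − 2w⁺k_{1,H}(x,b) + (w⁻)²k_{1,H}(a,a) + 2w⁻w⁺k_{1,H}(a,b) + (w⁺)²k_{1,H}(b,b) = ((b − x)(x − a) / (2(H+1)(2H+1)(b − a))) · [ (b − a)^{2H+1} − (b − x)^{2H+1} − (x − a)^{2H+1} ]. -/

import Mathlib

/-! The error functional is the quadratic form `k ↦ (δₓ - w⁻δₐ - w⁺δ_b)^{⊗2}(k)`, and the measure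
`δₓ - w⁻δₐ - w⁺δ_b` annihilates affine functions. Every term of `k_{1,H}` except
`|s - t|^{2H+2}` is a symmetrised product of a function with an affine function, so only the
stationary term contributes, and it is evaluated directly. -/

/-- The integrated fractional Brownian motion kernel `k_{1,H}`. -/
noncomputable def kIFBM (H x y : ℝ) : ℝ :=
  (1 / (2 * (2 * H + 1))) *
    (y * x ^ (2 * H + 1) + x * y ^ (2 * H + 1) -
      (1 / (2 * (H + 1))) * (x ^ (2 * H + 2) + y ^ (2 * H + 2) - |x - y| ^ (2 * H + 2)))

/-- The expected squared error of the linear interpolant `m(x) = w⁻f(a) + w⁺f(b)` for a centred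
Gaussian process `f` with covariance `k`, where `w⁻ = (b-x)/(b-a)`, `w⁺ = (x-a)/(b-a)`. -/
noncomputable def errE (k : ℝ → ℝ → ℝ) (a b x : ℝ) : ℝ :=
  k x x - 2 * ((b - x) / (b - a)) * k x a - 2 * ((x - a) / (b - a)) * k x b
    + ((b - x) / (b - a)) ^ 2 * k a a
    + 2 * ((b - x) / (b - a)) * ((x - a) / (b - a)) * k a b
    + ((x - a) / (b - a)) ^ 2 * k b b

noncomputable def interpErr (f : ℝ → ℝ) (a b x : ℝ) : ℝ :=
  f x - (b - x) / (b - a) * f a - (x - a) / (b - a) * f b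

section Interpolation

variable {a b : ℝ}

theorem interpErr_id (hab : a ≠ b) (x : ℝ) : interpErr (fun t => t) a b x = 0 := by
  have : b - a ≠ 0 := sub_ne_zero.mpr hab.symm
  unfold interpErr
  field_simp
  ring

theorem interpErr_const (hab : a ≠ b) (c x : ℝ) : interpErr (fun _ => c) a b x = 0 := by
  have : b - a ≠ 0 := sub_ne_zero.mpr hab.symm
  unfold interpErr
  field_simp
  ring

theorem errE_mul_add_mul_swap (f g : ℝ → ℝ) (a b x : ℝ) :
    errE (fun s t => f s * g t + g s * f t) a b x =
      2 * (interpErr f a b x * interpErr g a b x) := by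
  unfold errE interpErr
  ring

theorem errE_comp_abs_sub (ρ : ℝ → ℝ) (hρ : ρ 0 = 0) {x : ℝ} (hax : a < x) (hxb : x < b) :
    errE (fun s t => ρ |s - t|) a b x =
      2 * ((b - x) / (b - a) * ((x - a) / (b - a)) * ρ (b - a)
        - (b - x) / (b - a) * ρ (x - a) - (x - a) / (b - a) * ρ (b - x)) := by
  have hxa : |x - a| = x - a := abs_of_pos (sub_pos.mpr hax)
  have hxb' : |x - b| = b - x := by rw [abs_sub_comm]; exact abs_of_pos (sub_pos.mpr hxb)
  have hba : |a - b| = b - a := by rw [abs_sub_comm]; exact abs_of_pos (by linarith)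
  unfold errE
  beta_reduce
  rw [sub_self, sub_self, sub_self, abs_zero, hρ, hxa, hxb', hba]
  ring

theorem errE_abs_sub_rpow_add_one {p x : ℝ} (hp : p + 1 ≠ 0) (hax : a < x) (hxb : x < b) :
    errE (fun s t => |s - t| ^ (p + 1)) a b x =
      2 * ((b - x) * (x - a) / (b - a)) * ((b - a) ^ p - (b - x) ^ p - (x - a) ^ p) := by
  have hba : b - a ≠ 0 := by linarith
  rw [errE_comp_abs_sub (· ^ (p + 1)) (Real.zero_rpow hp) hax hxb]
  simp only [Real.rpow_add_one hba, Real.rpow_add_one (sub_pos.mpr hax).ne',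
    Real.rpow_add_one (sub_pos.mpr hxb).ne']
  field_simp
  ring

end Interpolation

-- Written as symmetrised products `f s * g t + g s * f t` so that `errE_mul_add_mul_swap` applies.
theorem kIFBM_eq (H s t : ℝ) :
    kIFBM H s t = 1 / (2 * (2 * H + 1)) * (s ^ (2 * H + 1) * t + s * t ^ (2 * H + 1)
      - 1 / (2 * (H + 1)) * (s ^ (2 * H + 1 + 1) * 1 + 1 * t ^ (2 * H + 1 + 1)
        - |s - t| ^ (2 * H + 1 + 1))) := by
  rw [kIFBM, show 2 * H + 2 = 2 * H + 1 + 1 by ring]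
  ring

theorem errE_kIFBM_general (H a b x : ℝ) (hH0 : 0 < H)
    (hax : a < x) (hxb : x < b) :
    errE (kIFBM H) a b x =
      ((b - x) * (x - a) / (2 * (H + 1) * (2 * H + 1) * (b - a))) *
        ((b - a) ^ (2 * H + 1) - (b - x) ^ (2 * H + 1) - (x - a) ^ (2 * H + 1)) := by
  have hab : a ≠ b := (hax.trans hxb).ne
  set p := 2 * H + 1
  calc errE (kIFBM H) a b x
      = 1 / (2 * p) * (errE (fun s t => s ^ p * t + s * t ^ p) a b x
          - 1 / (2 * (H + 1)) * (errE (fun s t => s ^ (p + 1) * 1 + 1 * t ^ (p + 1)) a b x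
            - errE (fun s t => |s - t| ^ (p + 1)) a b x)) := by
        simp only [errE, kIFBM_eq]
        ring
    _ = 1 / (2 * p) * (1 / (2 * (H + 1))) * errE (fun s t => |s - t| ^ (p + 1)) a b x := by
        simp only [errE_mul_add_mul_swap, interpErr_id hab, interpErr_const hab]
        ring
    _ = _ := by
        have : b - a ≠ 0 := sub_ne_zero.mpr hab.symm
        rw [errE_abs_sub_rpow_add_one (by linarith) hax hxb]
        field_simp

/-- For `H ∈ (0,1)` and `0 ≤ a < x < b`, the expected squared error of the linear interpolant
under the integrated fractional Brownian motion kernel has the closed form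
`((b−x)(x−a)/(2(H+1)(2H+1)(b−a))) ((b−a)^{2H+1} − (b−x)^{2H+1} − (x−a)^{2H+1})`. -/
theorem errE_kIFBM (H a b x : ℝ) (hH0 : 0 < H) (hH1 : H < 1)
    (ha : 0 ≤ a) (hax : a < x) (hxb : x < b) :
    errE (kIFBM H) a b x =
      ((b - x) * (x - a) / (2 * (H + 1) * (2 * H + 1) * (b - a))) *
        ((b - a) ^ (2 * H + 1) - (b - x) ^ (2 * H + 1) - (x - a) ^ (2 * H + 1)) :=
  errE_kIFBM_general H a b x hH0 hax hxb
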